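/- Let K, M be positive integers, c ∈ ℝ^K, R > 0, σ₁ > 0 and α > 1. Let (p₁, …, p_M) and (p′₁, …, p′_M) be two families of points of ℝ^K that agree at all but one index, and let p̃ᵢ = c + (pᵢ − c)/max(1, ‖pᵢ − c‖₂/R) and p̃′ᵢ = c + (p′ᵢ − c)/max(1, ‖p′ᵢ − c‖₂/R) be their projections onto the closed ball of radius R around c. Let P be the law of (1/M)(∑ᵢ p̃ᵢ + Z) and P′ the law of (1/M)(∑ᵢ p̃′ᵢ + Z), where Z has independent N(0, 4R²σ₁²) coordinates. Then the Rényi divergence of order α satisfies D_α(P‖P′) ≤ α/(2σ₁²); in particular, choosing σ₁ = √(α/(2τ₁)) makes the projected mean estimation step of AdaDPSyn (α, τ₁)-Rényi differentially private. -/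

import Mathlib

open MeasureTheory ProbabilityTheory

/- Rényi divergence of order `α`. -/
open Classical in
noncomputable def renyiDiv {X : Type*} [MeasurableSpace X] (α : ℝ) (P Q : Measure X) : EReal :=
  if P ≪ Q then
    (((α - 1)⁻¹ * Real.log (∫ x, (P.rnDeriv Q x).toReal ^ α ∂Q) : ℝ) : EReal)
  else ⊤

/-- The Euclidean (ℓ₂) norm on `ℝ^K`. -/
noncomputable def l2norm {K : ℕ} (x : Fin K → ℝ) : ℝ :=
  Real.sqrt (∑ k, (x k) ^ 2)

/-- Projection of `q` onto the closed ℓ₂-ball of radius `R` centered at `c`: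
`c + (q − c)/max(1, ‖q − c‖₂/R)`. -/
noncomputable def projBall {K : ℕ} (c : Fin K → ℝ) (R : ℝ) (q : Fin K → ℝ) : Fin K → ℝ :=
  c + (max 1 (l2norm (q - c) / R))⁻¹ • (q - c)

/-!
Replacing one point moves the sum of the projected points by at most `2R`, because both
projections lie in the ball of radius `R` around `c`. Both laws are products of Gaussians with
the same variance, and for these the Rényi divergence is exactly `α ‖μ - μ'‖₂² / (2v)`; the
scaling by `1/M` cancels. The computation rests on exponential tilting: multiplying the density
of `N(m', v)` by `β` times the log-likelihood ratio against `N(m, v)` gives `N(m' + β(m - m'), v)`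
up to the factor `exp (β (β - 1) (m - m')² / (2v))`.
-/

open Real
open scoped NNReal ENNReal

lemma renyiDiv_withDensity {X : Type*} [MeasurableSpace X] (α : ℝ) (Q : Measure X)
    [SigmaFinite Q] {f : X → ℝ≥0∞} (hf : Measurable f) :
    renyiDiv α (Q.withDensity f) Q
      = (((α - 1)⁻¹ * log (∫ x, (f x).toReal ^ α ∂Q) : ℝ) : EReal) := by
  rw [renyiDiv, if_pos (withDensity_absolutelyContinuous Q f),
    integral_congr_ae ((Measure.rnDeriv_withDensity Q hf).mono fun x hx => by rw [hx])]

lemma lintegral_pi_prod_eq_prod {ι : Type*} [Fintype ι] {Ω : ι → Type*}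
    [∀ i, MeasurableSpace (Ω i)] (μ : ∀ i, Measure (Ω i)) [∀ i, IsProbabilityMeasure (μ i)]
    {f : ∀ i, Ω i → ℝ≥0∞} (hf : ∀ i, Measurable (f i)) :
    ∫⁻ x, ∏ i, f i (x i) ∂Measure.pi μ = ∏ i, ∫⁻ t, f i t ∂μ i := by
  rw [lintegral_prod_eq_prod_lintegral_of_indepFun _ _
    (iIndepFun_pi fun i => (hf i).aemeasurable) fun i => (hf i).comp (measurable_pi_apply i)]
  exact Finset.prod_congr rfl fun i _ => (measurePreserving_eval μ i).lintegral_comp (hf i)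

lemma pi_eq_withDensity_prod {ι : Type*} [Fintype ι] {Ω : ι → Type*}
    [∀ i, MeasurableSpace (Ω i)] (μ ν : ∀ i, Measure (Ω i)) [∀ i, IsProbabilityMeasure (μ i)]
    [∀ i, SigmaFinite (ν i)] {f : ∀ i, Ω i → ℝ≥0∞} (hf : ∀ i, Measurable (f i))
    (hν : ∀ i, ν i = (μ i).withDensity (f i)) :
    Measure.pi ν = (Measure.pi μ).withDensity fun x => ∏ i, f i (x i) := by
  refine Measure.pi_eq fun s hs => ?_
  have hind : (Set.univ.pi s).indicator (fun x => ∏ i, f i (x i))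
      = fun x => ∏ i, (s i).indicator (f i) (x i) := by
    funext x
    classical simp only [Set.indicator_apply, Set.mem_univ_pi, Finset.prod_ite_zero,
      Finset.mem_univ, true_implies]
  rw [withDensity_apply _ (.univ_pi hs), ← lintegral_indicator (.univ_pi hs), hind,
    lintegral_pi_prod_eq_prod μ fun i => (hf i).indicator (hs i)]
  exact Finset.prod_congr rfl fun i _ => by
    rw [lintegral_indicator (hs i), hν i, withDensity_apply _ (hs i)]

/-- The log-density `log (dN(m, v) / dN(m', v))`. -/
noncomputable def gaussianLogRatio (m m' : ℝ) (v : ℝ≥0) (t : ℝ) : ℝ :=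
  ((t - m') ^ 2 - (t - m) ^ 2) / (2 * v)

@[fun_prop]
lemma measurable_gaussianLogRatio (m m' : ℝ) (v : ℝ≥0) :
    Measurable (gaussianLogRatio m m' v) := by
  unfold gaussianLogRatio; fun_prop

lemma gaussianPDFReal_mul_exp_gaussianLogRatio (m m' : ℝ) {v : ℝ≥0} (hv : v ≠ 0) (β t : ℝ) :
    gaussianPDFReal m' v t * exp (β * gaussianLogRatio m m' v t)
      = exp (β * (β - 1) * (m - m') ^ 2 / (2 * v)) * gaussianPDFReal (m' + β * (m - m')) v t := by
  have hv' : (0 : ℝ) < v := by positivity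
  have hexp : -(t - m') ^ 2 / (2 * v) + β * gaussianLogRatio m m' v t
      = β * (β - 1) * (m - m') ^ 2 / (2 * v) + -(t - (m' + β * (m - m'))) ^ 2 / (2 * v) := by
    unfold gaussianLogRatio
    field_simp
    ring
  unfold gaussianPDFReal
  rw [mul_assoc, ← exp_add, hexp, exp_add]
  ring

lemma gaussianReal_eq_withDensity_gaussianLogRatio (m m' : ℝ) {v : ℝ≥0} (hv : v ≠ 0) :
    gaussianReal m v
      = (gaussianReal m' v).withDensity
          fun t => ENNReal.ofReal (exp (gaussianLogRatio m m' v t)) := by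
  rw [gaussianReal_of_var_ne_zero m hv, gaussianReal_of_var_ne_zero m' hv,
    ← withDensity_mul _ (measurable_gaussianPDF _ _) (by fun_prop)]
  congr 1
  funext t
  have h := gaussianPDFReal_mul_exp_gaussianLogRatio m m' hv 1 t
  simp only [one_mul, sub_self, mul_zero, zero_mul, zero_div, exp_zero, add_sub_cancel] at h
  rw [Pi.mul_apply, gaussianPDF, gaussianPDF, ← ENNReal.ofReal_mul (gaussianPDFReal_nonneg _ _ _),
    h]

lemma integral_exp_gaussianLogRatio (m m' : ℝ) {v : ℝ≥0} (hv : v ≠ 0) (β : ℝ) :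
    ∫ t, exp (β * gaussianLogRatio m m' v t) ∂gaussianReal m' v
      = exp (β * (β - 1) * (m - m') ^ 2 / (2 * v)) := by
  simp_rw [integral_gaussianReal_eq_integral_smul hv, smul_eq_mul,
    gaussianPDFReal_mul_exp_gaussianLogRatio m m' hv, integral_const_mul,
    integral_gaussianPDFReal_eq_one _ hv, mul_one]

theorem renyiDiv_pi_gaussianReal {ι : Type*} [Fintype ι] (m m' : ι → ℝ) {v : ℝ≥0} (hv : v ≠ 0)
    {α : ℝ} (hα : α ≠ 1) :
    renyiDiv α (Measure.pi fun i => gaussianReal (m i) v)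
        (Measure.pi fun i => gaussianReal (m' i) v)
      = ((α * (∑ i, (m i - m' i) ^ 2) / (2 * v) : ℝ) : EReal) := by
  rw [pi_eq_withDensity_prod _ _ (fun i => by fun_prop)
      fun i => gaussianReal_eq_withDensity_gaussianLogRatio (m i) (m' i) hv,
    renyiDiv_withDensity _ _ (by fun_prop)]
  have hpow : ∀ x : ι → ℝ,
      (∏ i, ENNReal.ofReal (exp (gaussianLogRatio (m i) (m' i) v (x i)))).toReal ^ α
        = ∏ i, exp (α * gaussianLogRatio (m i) (m' i) v (x i)) := fun x => by
    simp_rw [ENNReal.toReal_prod, ENNReal.toReal_ofReal (exp_pos _).le, ← exp_sum, ← exp_mul,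
      Finset.sum_mul, mul_comm]
  have hint : ∫ x, ∏ i, exp (α * gaussianLogRatio (m i) (m' i) v (x i))
        ∂(Measure.pi fun i => gaussianReal (m' i) v)
      = exp (α * (α - 1) * (∑ i, (m i - m' i) ^ 2) / (2 * v)) := by
    rw [integral_fintype_prod_eq_prod fun i t => exp (α * gaussianLogRatio (m i) (m' i) v t)]
    simp_rw [integral_exp_gaussianLogRatio _ _ hv, ← exp_sum, Finset.mul_sum, Finset.sum_div]
  simp_rw [hpow, hint, log_exp]
  rw [EReal.coe_eq_coe_iff]
  field_simp [sub_ne_zero.mpr hα]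

lemma pi_gaussianReal_map_smul_add {ι : Type*} [Fintype ι] (v : ℝ≥0) (c : ℝ) (s : ι → ℝ) :
    (Measure.pi fun _ : ι => gaussianReal 0 v).map (fun z => c • (s + z))
      = Measure.pi fun i => gaussianReal (c * s i) (NNReal.mk (c ^ 2) (sq_nonneg c) * v) := by
  have hcoord : ∀ i, MeasurePreserving (fun t => c * (s i + t)) (gaussianReal 0 v)
      (gaussianReal (c * s i) (NNReal.mk (c ^ 2) (sq_nonneg c) * v)) := fun i => by
    refine ⟨by fun_prop, ?_⟩
    rw [show (fun t => c * (s i + t)) = (c * ·) ∘ (s i + ·) from rfl,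
      ← Measure.map_map (measurable_const_mul c) (measurable_const_add (s i)),
      gaussianReal_map_const_add, gaussianReal_map_const_mul, zero_add]
  exact (measurePreserving_pi _ _ hcoord).map_eq

theorem renyiDiv_map_smul_add_pi_gaussianReal {ι : Type*} [Fintype ι] {v : ℝ≥0} (hv : v ≠ 0)
    {c : ℝ} (hc : c ≠ 0) (s s' : ι → ℝ) {α : ℝ} (hα : α ≠ 1) :
    renyiDiv α ((Measure.pi fun _ : ι => gaussianReal 0 v).map (fun z => c • (s + z)))
      ((Measure.pi fun _ : ι => gaussianReal 0 v).map (fun z => c • (s' + z)))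
      = ((α * (∑ i, (s i - s' i) ^ 2) / (2 * v) : ℝ) : EReal) := by
  have hcv : NNReal.mk (c ^ 2) (sq_nonneg c) * v ≠ 0 :=
    mul_ne_zero (by simpa [← NNReal.coe_eq_zero] using hc) hv
  rw [pi_gaussianReal_map_smul_add, pi_gaussianReal_map_smul_add,
    renyiDiv_pi_gaussianReal _ _ hcv hα, EReal.coe_eq_coe_iff, NNReal.coe_mul, NNReal.coe_mk]
  simp_rw [← mul_sub, mul_pow, ← Finset.mul_sum]
  field_simp

lemma l2norm_eq_norm_toLp {K : ℕ} (x : Fin K → ℝ) :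
    l2norm x = ‖(WithLp.toLp 2 x : EuclideanSpace ℝ (Fin K))‖ := by
  simp [l2norm, EuclideanSpace.norm_eq]

lemma norm_toLp_projBall_sub_le {K : ℕ} (c : Fin K → ℝ) {R : ℝ} (hR : 0 < R) (q : Fin K → ℝ) :
    ‖(WithLp.toLp 2 (projBall c R q - c) : EuclideanSpace ℝ (Fin K))‖ ≤ R := by
  set y : EuclideanSpace ℝ (Fin K) := WithLp.toLp 2 (q - c)
  have hmax : 0 < max 1 (‖y‖ / R) := lt_max_of_lt_left one_pos
  have hproj : projBall c R q - c = (max 1 (‖y‖ / R))⁻¹ • (q - c) := by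
    rw [projBall, l2norm_eq_norm_toLp, add_sub_cancel_left]
  rw [hproj, WithLp.toLp_smul, norm_smul, Real.norm_of_nonneg (inv_nonneg.mpr hmax.le),
    inv_mul_le_iff₀ hmax]
  calc ‖y‖ = R * (‖y‖ / R) := by field_simp
    _ ≤ max 1 (‖y‖ / R) * R := by rw [mul_comm]; gcongr; exact le_max_right _ _

lemma sum_sq_projBall_sub_projBall_le {K : ℕ} (c : Fin K → ℝ) {R : ℝ} (hR : 0 < R)
    (q q' : Fin K → ℝ) : ∑ k, (projBall c R q k - projBall c R q' k) ^ 2 ≤ (2 * R) ^ 2 := by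
  have hnorm : ‖(WithLp.toLp 2 (projBall c R q - projBall c R q') : EuclideanSpace ℝ (Fin K))‖
      ≤ 2 * R := by
    rw [← sub_sub_sub_cancel_right _ _ c, WithLp.toLp_sub, two_mul]
    exact (norm_sub_le _ _).trans
      (add_le_add (norm_toLp_projBall_sub_le c hR q) (norm_toLp_projBall_sub_le c hR q'))
  have hsq := EuclideanSpace.real_norm_sq_eq (WithLp.toLp 2 (projBall c R q - projBall c R q'))
  simp only [Pi.sub_apply] at hsq
  rw [← hsq]
  gcongr

lemma Finset.sum_sub_sum_eq_sub_of_forall_ne {ι G : Type*} [Fintype ι] [AddCommGroup G]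
    {f g : ι → G} {j : ι} (h : ∀ i, i ≠ j → f i = g i) : ∑ i, f i - ∑ i, g i = f j - g j := by
  rw [← Finset.sum_sub_distrib]
  exact Finset.sum_eq_single j (fun i _ hij => by rw [h i hij, sub_self]) (by simp)

theorem projected_mean_estimation_rdp_general (K M : ℕ) (hM : 0 < M)
    (c : Fin K → ℝ) (R σ₁ α : ℝ) (hR : 0 < R) (hσ₁ : 0 < σ₁) (hα : 1 < α)
    (p p' : Fin M → (Fin K → ℝ)) (j : Fin M) (hagree : ∀ i, i ≠ j → p i = p' i) :
    renyiDiv α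
      ((Measure.pi fun _ : Fin K => gaussianReal 0 (4 * R ^ 2 * σ₁ ^ 2).toNNReal).map
        (fun z => (M : ℝ)⁻¹ • ((∑ i, projBall c R (p i)) + z)))
      ((Measure.pi fun _ : Fin K => gaussianReal 0 (4 * R ^ 2 * σ₁ ^ 2).toNNReal).map
        (fun z => (M : ℝ)⁻¹ • ((∑ i, projBall c R (p' i)) + z)))
      ≤ ((α / (2 * σ₁ ^ 2) : ℝ) : EReal) ∧
    ∀ τ₁ : ℝ, 0 < τ₁ → σ₁ = Real.sqrt (α / (2 * τ₁)) →
      renyiDiv α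
        ((Measure.pi fun _ : Fin K => gaussianReal 0 (4 * R ^ 2 * σ₁ ^ 2).toNNReal).map
          (fun z => (M : ℝ)⁻¹ • ((∑ i, projBall c R (p i)) + z)))
        ((Measure.pi fun _ : Fin K => gaussianReal 0 (4 * R ^ 2 * σ₁ ^ 2).toNNReal).map
          (fun z => (M : ℝ)⁻¹ • ((∑ i, projBall c R (p' i)) + z)))
        ≤ (τ₁ : EReal) := by
  have hvar : (0 : ℝ) < 4 * R ^ 2 * σ₁ ^ 2 := by positivity
  set s := ∑ i, projBall c R (p i)
  set s' := ∑ i, projBall c R (p' i)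
  have hsens : ∑ k, (s k - s' k) ^ 2 ≤ (2 * R) ^ 2 := by
    simp_rw [s, s', ← Pi.sub_apply,
      Finset.sum_sub_sum_eq_sub_of_forall_ne fun i hi => congrArg _ (hagree i hi)]
    exact sum_sq_projBall_sub_projBall_le c hR _ _
  rw [renyiDiv_map_smul_add_pi_gaussianReal (Real.toNNReal_pos.mpr hvar).ne' (by positivity) s s'
    hα.ne', Real.coe_toNNReal _ hvar.le]
  have hrdp : α * (∑ k, (s k - s' k) ^ 2) / (2 * (4 * R ^ 2 * σ₁ ^ 2)) ≤ α / (2 * σ₁ ^ 2) := by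
    rw [div_le_div_iff₀ (by positivity) (by positivity)]
    nlinarith [mul_le_mul_of_nonneg_left hsens (by positivity : (0 : ℝ) ≤ α * (2 * σ₁ ^ 2))]
  refine ⟨EReal.coe_le_coe hrdp, fun τ₁ hτ₁ hσ => (EReal.coe_le_coe hrdp).trans_eq ?_⟩
  rw [hσ, Real.sq_sqrt (by positivity), EReal.coe_eq_coe_iff]
  field_simp

/-- RDP of the projected mean estimation step of AdaDPSyn: the law of
`(1/M)(∑ᵢ p̃ᵢ + Z)` with `Z` having i.i.d. `N(0, 4R²σ₁²)` coordinates, on two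
neighboring families, has Rényi divergence of order `α` at most `α/(2σ₁²)`;
in particular, choosing `σ₁ = √(α/(2τ₁))` makes the step `(α, τ₁)`-RDP. -/
theorem projected_mean_estimation_rdp (K M : ℕ) (hK : 0 < K) (hM : 0 < M)
    (c : Fin K → ℝ) (R σ₁ α : ℝ) (hR : 0 < R) (hσ₁ : 0 < σ₁) (hα : 1 < α)
    (p p' : Fin M → (Fin K → ℝ)) (j : Fin M) (hagree : ∀ i, i ≠ j → p i = p' i) :
    renyiDiv α
      ((Measure.pi fun _ : Fin K => gaussianReal 0 (4 * R ^ 2 * σ₁ ^ 2).toNNReal).map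
        (fun z => (M : ℝ)⁻¹ • ((∑ i, projBall c R (p i)) + z)))
      ((Measure.pi fun _ : Fin K => gaussianReal 0 (4 * R ^ 2 * σ₁ ^ 2).toNNReal).map
        (fun z => (M : ℝ)⁻¹ • ((∑ i, projBall c R (p' i)) + z)))
      ≤ ((α / (2 * σ₁ ^ 2) : ℝ) : EReal) ∧
    ∀ τ₁ : ℝ, 0 < τ₁ → σ₁ = Real.sqrt (α / (2 * τ₁)) →
      renyiDiv α
        ((Measure.pi fun _ : Fin K => gaussianReal 0 (4 * R ^ 2 * σ₁ ^ 2).toNNReal).map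
          (fun z => (M : ℝ)⁻¹ • ((∑ i, projBall c R (p i)) + z)))
        ((Measure.pi fun _ : Fin K => gaussianReal 0 (4 * R ^ 2 * σ₁ ^ 2).toNNReal).map
          (fun z => (M : ℝ)⁻¹ • ((∑ i, projBall c R (p' i)) + z)))
        ≤ (τ₁ : EReal) :=
  projected_mean_estimation_rdp_general K M hM c R σ₁ α hR hσ₁ hα p p' j hagree
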